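/- arXiv:2511.20984 — 2 statements merged into one kernel-verified Lean document; each statement's English description precedes it below -/
import Mathlib

section
/- For impartial games with activeness G^g, H^h: G^g ⋈ H^h if and only if there exists an active game X^1 such that o(G^g + X^1) = o(H^h + X^1) = 𝒫. -/
inductive AGame : Type where
  | mk : List AGame → Bool → AGame

namespace AGame

noncomputable instance : DecidableEq AGame := Classical.decEq _

def opts : AGame → List AGame | mk gs _ => gs
def act : AGame → Bool | mk _ g => g

theorem sizeOf_lt_of_mem {G G' : AGame} (h : G' ∈ G.opts) : sizeOf G' < sizeOf G := by
  cases G with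
  | mk gs g =>
    simp only [opts] at h
    have := List.sizeOf_lt_of_mem h
    simp [AGame.mk.sizeOf_spec]
    omega

/-- Disjunctive sum of games with activeness. -/
def add (G H : AGame) : AGame :=
  mk (G.opts.attach.map (fun x => add x.1 H) ++
      H.opts.attach.map (fun y => add G y.1)) (G.act || H.act)
termination_by sizeOf G + sizeOf H
decreasing_by
  · have := sizeOf_lt_of_mem x.2; omega
  · have := sizeOf_lt_of_mem y.2; omega

/-- `PPos G` means the outcome of `G` is 𝒫 (second player wins). -/
def PPos (G : AGame) : Prop :=
  G.act = false ∨ ∀ G' ∈ G.opts.attach, ¬ PPos G'.1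
termination_by sizeOf G
decreasing_by
  have := sizeOf_lt_of_mem G'.2; omega

/-- Hereditary set-equality (the paper's ≅). -/
def Identical (G H : AGame) : Prop :=
  G.act = H.act ∧ (∀ G' ∈ G.opts.attach, ∃ H' ∈ H.opts.attach, Identical G'.1 H'.1)
              ∧ (∀ H' ∈ H.opts.attach, ∃ G' ∈ G.opts.attach, Identical G'.1 H'.1)
termination_by sizeOf G + sizeOf H
decreasing_by
  · have := sizeOf_lt_of_mem G'.2; have := sizeOf_lt_of_mem H'.2; omega
  · have := sizeOf_lt_of_mem G'.2; have := sizeOf_lt_of_mem H'.2; omega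

/-- Equivalence of games with activeness: same outcome in every sum. -/
def Equiv (G H : AGame) : Prop := ∀ X : AGame, (PPos (add G X) ↔ PPos (add H X))

end AGame

namespace AGame

/-- Nimbers with activeness: `star γ n ≅ {star γ j : j < n}^{γ n}`. -/
def star (γ : ℕ → Bool) : ℕ → AGame
  | n => mk ((List.range n).attach.map (fun j => star γ j.1)) (γ n)
termination_by n => n
decreasing_by
  have := j.2; simp [List.mem_range] at this; omega

/-- The generalized Grundy set `𝒢^γ(G)`. -/
def GSet (γ : ℕ → Bool) (G : AGame) : Set ℕ := {n | PPos (add G (star γ n))}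

/-- Minimum excludant of a set of naturals. -/
noncomputable def mex (S : Set ℕ) : ℕ := sInf {n | n ∉ S}

/-- Ordinary Grundy value, computed ignoring activeness. -/
noncomputable def grundy (G : AGame) : ℕ :=
  mex {m | ∃ G' ∈ G.opts.attach, grundy G'.1 = m}
termination_by sizeOf G
decreasing_by
  have := sizeOf_lt_of_mem G'.2; omega

/-- The three types of games with activeness. -/
inductive AType : Type where
  | inactive : AType            -- type 0
  | activeSomeInactive : AType  -- type 1_{∃0}
  | activeAllActive : AType     -- type 1_{∀1}

open Classical in
/-- `type(G^g)`. -/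
noncomputable def typ (G : AGame) : AType :=
  if G.act = false then .inactive
  else if ∃ G' ∈ G.opts, G'.act = false then .activeSomeInactive
  else .activeAllActive

/-- Formal birthday `b(G)`. -/
def bday (G : AGame) : ℕ :=
  (G.opts.attach.map (fun G' => bday G'.1 + 1)).foldr max 0
termination_by sizeOf G
decreasing_by
  have := sizeOf_lt_of_mem G'.2; omega

/-- An option `G'` of `G` is reversible if it has an option equivalent to `G`. -/
def Reversible (G G' : AGame) : Prop := ∃ G'' ∈ G'.opts, Equiv G'' G

/-- A canonical game: all options canonical and no option reversible. -/
def Canonical (G : AGame) : Prop :=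
  (∀ G' ∈ G.opts.attach, Canonical G'.1) ∧ (∀ G' ∈ G.opts, ¬ Reversible G G')
termination_by sizeOf G
decreasing_by
  have := sizeOf_lt_of_mem G'.2; omega

/-- A transitive game: all options transitive and options of options are options. -/
def TransGame (G : AGame) : Prop :=
  (∀ G' ∈ G.opts.attach, TransGame G'.1) ∧ (∀ G' ∈ G.opts, ∀ G'' ∈ G'.opts, G'' ∈ G.opts)
termination_by sizeOf G
decreasing_by
  have := sizeOf_lt_of_mem G'.2; omega

/-- `G` is covered by `H` if every option of `G` is equivalent to some option of `H`. -/
def Covered (G H : AGame) : Prop := ∀ G' ∈ G.opts, ∃ H' ∈ H.opts, Equiv G' H'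

/-- The relation `G ⋈ H`. -/
def Bowtie (G H : AGame) : Prop :=
  (∀ G' ∈ G.opts, ¬ Equiv G' H) ∧ (∀ H' ∈ H.opts, ¬ Equiv G H')

/-- The linear chain `∅^{g₀ g₁ … gₙ}`. -/
def chain (g : ℕ → Bool) : ℕ → AGame
  | 0 => mk [] (g 0)
  | n + 1 => mk [chain g n] (g (n + 1))

end AGame

namespace AGame

instance : Inhabited AGame := ⟨mk [] false⟩

theorem act_mk (l : List AGame) (b : Bool) : (mk l b).act = b := rfl
theorem opts_mk (l : List AGame) (b : Bool) : (mk l b).opts = l := rfl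

theorem add_def (G H : AGame) : add G H =
    mk (G.opts.attach.map (fun x => add x.1 H) ++ H.opts.attach.map (fun y => add G y.1))
      (G.act || H.act) := by
  rw [add]

theorem act_add (G H : AGame) : (add G H).act = (G.act || H.act) := by
  rw [add_def, act_mk]

theorem add_mem_left {A G H : AGame} (h : A ∈ G.opts) : add A H ∈ (add G H).opts := by
  rw [add_def, opts_mk, List.mem_append]
  exact Or.inl (List.mem_map.2 ⟨⟨A, h⟩, List.mem_attach _ _, rfl⟩)

theorem add_mem_right {B G H : AGame} (h : B ∈ H.opts) : add G B ∈ (add G H).opts := by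
  rw [add_def, opts_mk, List.mem_append]
  exact Or.inr (List.mem_map.2 ⟨⟨B, h⟩, List.mem_attach _ _, rfl⟩)

theorem opts_add_cases {O G H : AGame} (h : O ∈ (add G H).opts) :
    (∃ A ∈ G.opts, O = add A H) ∨ (∃ B ∈ H.opts, O = add G B) := by
  rw [add_def, opts_mk, List.mem_append] at h
  rcases h with h | h
  · rcases List.mem_map.1 h with ⟨⟨A, hA⟩, _, rfl⟩
    exact Or.inl ⟨A, hA, rfl⟩
  · rcases List.mem_map.1 h with ⟨⟨B, hB⟩, _, rfl⟩
    exact Or.inr ⟨B, hB, rfl⟩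

theorem ppos_def (G : AGame) :
    PPos G ↔ (G.act = false ∨ ∀ G' ∈ G.opts, ¬ PPos G') := by
  rw [PPos]
  constructor
  · rintro (h | h)
    · exact Or.inl h
    · exact Or.inr fun G' hG' => h ⟨G', hG'⟩ (List.mem_attach _ _)
  · rintro (h | h)
    · exact Or.inl h
    · exact Or.inr fun G' _ => h G'.1 G'.2

theorem ppos_of_act_false {G : AGame} (h : G.act = false) : PPos G :=
  (ppos_def G).2 (Or.inl h)

theorem ppos_iff_of_act {G : AGame} (h : G.act = true) :
    PPos G ↔ ∀ G' ∈ G.opts, ¬ PPos G' := by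
  rw [ppos_def, h]
  simp

theorem not_ppos {G O : AGame} (h : G.act = true) (hm : O ∈ G.opts) (hp : PPos O) :
    ¬ PPos G := fun hP => ((ppos_iff_of_act h).1 hP) O hm hp

/-- Fully activated copy of a game. -/
def up (G : AGame) : AGame :=
  mk (G.opts.attach.map (fun x => up x.1)) true
termination_by sizeOf G
decreasing_by
  have := sizeOf_lt_of_mem x.2; omega

theorem act_up (G : AGame) : (up G).act = true := by rw [up, act_mk]

theorem up_mem {G' G : AGame} (h : G' ∈ G.opts) : up G' ∈ (up G).opts := by
  rw [up, opts_mk]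
  exact List.mem_map.2 ⟨⟨G', h⟩, List.mem_attach _ _, rfl⟩

/-- A strong induction principle along options. -/
theorem strong_ind {motive : AGame → Prop}
    (ind : ∀ G, (∀ G' ∈ G.opts, motive G') → motive G) : ∀ G, motive G := by
  have key : ∀ n (G : AGame), sizeOf G < n → motive G := by
    intro n
    induction n with
    | zero => intro G h; omega
    | succ n ih =>
      intro G h
      exact ind G fun G' hG' => ih G' (by have := sizeOf_lt_of_mem hG'; omega)
  exact fun G => key (sizeOf G + 1) G (by omega)

theorem act_add_right_true {G X : AGame} (h : X.act = true) : (add G X).act = true := by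
  rw [act_add, h, Bool.or_true]

/-- Mirror lemma: `A + up A` is always a 𝒫-position. -/
theorem mirror : ∀ A : AGame, PPos (add A (up A)) := by
  refine strong_ind fun A ih => ?_
  rw [ppos_iff_of_act (act_add_right_true (act_up A))]
  intro O hO
  rcases opts_add_cases hO with ⟨A', hA', rfl⟩ | ⟨B, hB, rfl⟩
  · -- A' + up A : has 𝒫 option A' + up A'
    exact not_ppos (act_add_right_true (act_up A)) (add_mem_right (up_mem hA')) (ih A' hA')
  · -- A + B with B ∈ (up A).opts, so B = up A' for some option A'
    rw [up, opts_mk] at hB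
    rcases List.mem_map.1 hB with ⟨⟨A', hA'⟩, _, rfl⟩
    exact not_ppos (act_add_right_true (act_up A')) (add_mem_left hA') (ih A' hA')

/-- Flip lemma: a distinguishing position (in either polarity) can be turned into
an *active* one with reversed polarity. -/
theorem flip {A B T₀ : AGame} (h₁ : PPos (add A T₀)) (h₂ : ¬ PPos (add B T₀)) :
    ∃ T : AGame, T.act = true ∧ PPos (add B T) ∧ ¬ PPos (add A T) := by
  refine ⟨mk (T₀ :: B.opts.map up) true, rfl, ?_, ?_⟩
  · rw [ppos_iff_of_act (act_add_right_true (act_mk _ _))]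
    intro O hO
    rcases opts_add_cases hO with ⟨B', hB', rfl⟩ | ⟨W, hW, rfl⟩
    · -- B' + T : has 𝒫 option B' + up B'
      have hup : up B' ∈ (mk (T₀ :: B.opts.map up) true).opts := by
        rw [opts_mk]
        exact List.mem_cons_of_mem _ (List.mem_map.2 ⟨B', hB', rfl⟩)
      exact not_ppos (act_add_right_true (act_mk _ _)) (add_mem_right hup) (mirror B')
    · rw [opts_mk] at hW
      rcases List.mem_cons.1 hW with rfl | hW
      · exact h₂
      · rcases List.mem_map.1 hW with ⟨B', hB', rfl⟩
        exact not_ppos (act_add_right_true (act_up B')) (add_mem_left hB') (mirror B')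
  · exact not_ppos (act_add_right_true (act_mk _ _))
      (add_mem_right (by rw [opts_mk]; exact List.mem_cons_self)) h₁

/-- Separation lemma: non-equivalent games can be separated by an active game
with any prescribed polarity. -/
theorem separation {A B : AGame} (h : ¬ Equiv A B) :
    ∃ T : AGame, T.act = true ∧ PPos (add A T) ∧ ¬ PPos (add B T) := by
  rw [Equiv] at h
  push_neg at h
  obtain ⟨X, hX⟩ := h
  rcases hX with ⟨hA, hB⟩ | ⟨hA, hB⟩
  · obtain ⟨T₁, hT₁, hB₁, hA₁⟩ := flip hA hB
    obtain ⟨T₂, hT₂, hA₂, hB₂⟩ := flip hB₁ hA₁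
    exact ⟨T₂, hT₂, hA₂, hB₂⟩
  · exact flip hB hA

open Classical in
/-- A chosen active witness with `PPos (A + wit A B)` and `¬ PPos (B + wit A B)`. -/
noncomputable def wit (A B : AGame) : AGame :=
  if h : ∃ T : AGame, T.act = true ∧ PPos (add A T) ∧ ¬ PPos (add B T) then h.choose
  else default

theorem wit_spec {A B : AGame} (h : ¬ Equiv A B) :
    (wit A B).act = true ∧ PPos (add A (wit A B)) ∧ ¬ PPos (add B (wit A B)) := by
  have hex := separation h
  rw [wit, dif_pos hex]
  exact hex.choose_spec

theorem equiv_symm {A B : AGame} (h : Equiv A B) : Equiv B A :=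
  fun X => (h X).symm

end AGame
/-- `G ⋈ H` iff there is an active game making both sums 𝒫-positions. -/
theorem AGame.bowtie_iff (G H : AGame) :
    AGame.Bowtie G H ↔
      ∃ X : AGame, X.act = true ∧ AGame.PPos (AGame.add G X) ∧ AGame.PPos (AGame.add H X) := by
  constructor
  · rintro ⟨hGside, hHside⟩
    refine ⟨mk (G.opts.map (fun G' => wit G' H) ++ H.opts.map (fun H' => wit H' G)) true,
      rfl, ?_, ?_⟩
    · rw [ppos_iff_of_act (act_add_right_true (act_mk _ _))]
      intro O hO
      rcases opts_add_cases hO with ⟨G', hG', rfl⟩ | ⟨W, hW, rfl⟩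
      · -- G' + X is an 𝒩-position: it has the 𝒫 option G' + wit G' H
        obtain ⟨hwact, hwP, hwN⟩ := wit_spec (hGside G' hG')
        have hmem : wit G' H ∈ (mk (G.opts.map (fun G' => wit G' H) ++
            H.opts.map (fun H' => wit H' G)) true).opts := by
          rw [opts_mk, List.mem_append]
          exact Or.inl (List.mem_map.2 ⟨G', hG', rfl⟩)
        exact not_ppos (act_add_right_true (act_mk _ _)) (add_mem_right hmem) hwP
      · rw [opts_mk, List.mem_append] at hW
        rcases hW with hW | hW
        · rcases List.mem_map.1 hW with ⟨G', hG', rfl⟩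
          obtain ⟨hwact, hwP, hwN⟩ := wit_spec (hGside G' hG')
          exact not_ppos (act_add_right_true hwact) (add_mem_left hG') hwP
        · rcases List.mem_map.1 hW with ⟨H', hH', rfl⟩
          obtain ⟨hwact, hwP, hwN⟩ :=
            wit_spec (fun e => hHside H' hH' (equiv_symm e))
          exact hwN
    · rw [ppos_iff_of_act (act_add_right_true (act_mk _ _))]
      intro O hO
      rcases opts_add_cases hO with ⟨H', hH', rfl⟩ | ⟨W, hW, rfl⟩
      · obtain ⟨hwact, hwP, hwN⟩ := wit_spec (fun e => hHside H' hH' (equiv_symm e))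
        have hmem : wit H' G ∈ (mk (G.opts.map (fun G' => wit G' H) ++
            H.opts.map (fun H' => wit H' G)) true).opts := by
          rw [opts_mk, List.mem_append]
          exact Or.inr (List.mem_map.2 ⟨H', hH', rfl⟩)
        exact not_ppos (act_add_right_true (act_mk _ _)) (add_mem_right hmem) hwP
      · rw [opts_mk, List.mem_append] at hW
        rcases hW with hW | hW
        · rcases List.mem_map.1 hW with ⟨G', hG', rfl⟩
          obtain ⟨hwact, hwP, hwN⟩ := wit_spec (hGside G' hG')
          exact hwN
        · rcases List.mem_map.1 hW with ⟨H', hH', rfl⟩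
          obtain ⟨hwact, hwP, hwN⟩ :=
            wit_spec (fun e => hHside H' hH' (equiv_symm e))
          exact not_ppos (act_add_right_true hwact) (add_mem_left hH') hwP
  · rintro ⟨X, hact, hG, hH⟩
    constructor
    · intro G' hG' hEq
      have hP : PPos (add G' X) := (hEq X).2 hH
      exact not_ppos (act_add_right_true hact) (add_mem_left hG') hP hG
    · intro H' hH' hEq
      have hP : PPos (add H' X) := (hEq X).1 hG
      exact not_ppos (act_add_right_true hact) (add_mem_left hH') hP hH
end

section
/- Every transitive impartial game with activeness G^g satisfies 𝒢(G^g) = b(G^g), where b is the formal birthday (height), and moreover {b(G'^{g'}) : G'^{g'} ∈ G^g} = {0,1,...,b(G^g)−1}; consequently every transitive game is canonical. -/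
/-!
In a transitive game the options of an option are options, so by induction the birthdays of the
options fill the whole interval `[0, b(G))`. The Grundy value is the mex of the options' Grundy
values, which by induction are their birthdays, hence `𝒢(G) = b(G)`. Grundy values are an
invariant of equivalence (test against active nimbers `*n`), so an option `G''` of an option
of `G` equivalent to `G` would be an option of `G` with `b(G'') = 𝒢(G'') = 𝒢(G) = b(G)`,
contradicting `b(G'') < b(G)`.
-/

namespace AGame

theorem opts_induction {motive : AGame → Prop}
    (step : ∀ G, (∀ G' ∈ G.opts, motive G') → motive G) (G : AGame) : motive G :=
  step G fun G' _ => opts_induction step G'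
termination_by sizeOf G
decreasing_by exact sizeOf_lt_of_mem ‹_›

theorem act_add_s17 (A B : AGame) : (add A B).act = (A.act || B.act) := by
  rw [add]; rfl

theorem mem_opts_add {A B C : AGame} :
    C ∈ (add A B).opts ↔
      (∃ A' ∈ A.opts, add A' B = C) ∨ ∃ B' ∈ B.opts, add A B' = C := by
  rw [add]
  simp [opts]

theorem act_star (γ : ℕ → Bool) (n : ℕ) : (star γ n).act = γ n := by
  rw [star]; rfl

theorem mem_opts_star {γ : ℕ → Bool} {n : ℕ} {C : AGame} :
    C ∈ (star γ n).opts ↔ ∃ j < n, star γ j = C := by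
  rw [star]
  simp [opts]

theorem pPos_iff (G : AGame) : PPos G ↔ G.act = false ∨ ∀ G' ∈ G.opts, ¬ PPos G' := by
  rw [PPos]; simp

theorem transGame_iff (G : AGame) :
    TransGame G ↔
      (∀ G' ∈ G.opts, TransGame G') ∧ ∀ G' ∈ G.opts, ∀ G'' ∈ G'.opts, G'' ∈ G.opts := by
  rw [TransGame]; simp

theorem canonical_iff (G : AGame) : Canonical G ↔
    (∀ G' ∈ G.opts, Canonical G') ∧ ∀ G' ∈ G.opts, ¬ Reversible G G' := by
  rw [Canonical]; simp

theorem TransGame.of_mem_opts {G G' : AGame} (h : TransGame G) (hG' : G' ∈ G.opts) :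
    TransGame G' :=
  ((transGame_iff G).1 h).1 G' hG'

theorem TransGame.mem_opts_of_mem_opts {G G' G'' : AGame} (h : TransGame G)
    (hG' : G' ∈ G.opts) (hG'' : G'' ∈ G'.opts) : G'' ∈ G.opts :=
  ((transGame_iff G).1 h).2 G' hG' G'' hG''

theorem mex_le_of_notMem {S : Set ℕ} {n : ℕ} (h : n ∉ S) : mex S ≤ n :=
  Nat.sInf_le h

theorem mex_notMem {S : Set ℕ} (hS : S.Finite) : mex S ∉ S :=
  Nat.sInf_mem hS.exists_notMem

theorem mex_Iio (b : ℕ) : mex (Set.Iio b) = b := by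
  simp only [mex, Set.mem_Iio, not_lt]
  exact csInf_Ici

theorem grundy_eq_mex (G : AGame) : grundy G = mex {m | ∃ G' ∈ G.opts, grundy G' = m} := by
  rw [grundy]; simp

theorem grundy_eq_iff {G : AGame} {n : ℕ} :
    grundy G = n ↔ (∀ G' ∈ G.opts, grundy G' ≠ n) ∧ n ≤ grundy G := by
  have hfin : {m | ∃ G' ∈ G.opts, grundy G' = m}.Finite :=
    (List.finite_toSet G.opts).image grundy
  constructor
  · rintro rfl
    have hnotMem := mex_notMem hfin
    rw [← grundy_eq_mex] at hnotMem
    exact ⟨fun G' hG' hG'n => hnotMem ⟨G', hG', hG'n⟩, le_rfl⟩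
  · rintro ⟨hn, hle⟩
    refine le_antisymm ?_ hle
    rw [grundy_eq_mex]
    exact mex_le_of_notMem fun ⟨G', hG', hG'n⟩ => hn G' hG' hG'n

/-- The active nimber keeps every position of the sum active, so this is ordinary
Sprague–Grundy. -/
theorem pPos_add_star_iff (A : AGame) (n : ℕ) :
    PPos (add A (star (fun _ => true) n)) ↔ grundy A = n := by
  induction A using opts_induction generalizing n with
  | step A ihA =>
  induction n using Nat.strong_induction_on with
  | _ n ihn =>
  rw [pPos_iff]
  simp only [act_add_s17, act_star, Bool.or_true, Bool.true_eq_false, false_or,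
    mem_opts_add, mem_opts_star, or_imp, forall_and, forall_exists_index, and_imp,
    forall_apply_eq_imp_iff₂]
  rw [grundy_eq_iff]
  refine and_congr (forall₂_congr fun A' hA' => by rw [ihA A' hA'])
    ⟨fun h => ?_, fun h j hj => ?_⟩
  · by_contra! hlt
    exact h _ hlt ((ihn _ hlt).2 rfl)
  · rw [ihn j hj]
    omega

theorem Equiv.grundy_eq {G H : AGame} (h : Equiv G H) : grundy G = grundy H := by
  have := h (star (fun _ => true) (grundy G))
  rw [pPos_add_star_iff, pPos_add_star_iff] at this
  exact (this.1 rfl).symm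

theorem bday_eq (G : AGame) : bday G = (G.opts.map fun G' => bday G' + 1).foldr max 0 := by
  rw [bday]
  simp

theorem lt_bday_iff {G : AGame} {k : ℕ} : k < bday G ↔ ∃ G' ∈ G.opts, k ≤ bday G' := by
  rw [bday_eq]
  constructor
  · intro hk
    by_contra! hle
    refine (List.max_le_of_forall_le _ k ?_).not_gt hk
    simpa using hle
  · rintro ⟨G', hG', hk⟩
    exact List.le_max_of_le (List.mem_map_of_mem (f := fun G' => bday G' + 1) hG') (by omega)

theorem bday_lt_of_mem_opts {G G' : AGame} (h : G' ∈ G.opts) : bday G' < bday G :=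
  lt_bday_iff.2 ⟨G', h, le_rfl⟩

theorem TransGame.exists_mem_opts_bday_eq_iff {G : AGame} (h : TransGame G) (k : ℕ) :
    (∃ G' ∈ G.opts, bday G' = k) ↔ k < bday G := by
  induction G using opts_induction generalizing k with
  | step G ih =>
  refine ⟨fun ⟨G', hG', hk⟩ => hk ▸ bday_lt_of_mem_opts hG', fun hk => ?_⟩
  obtain ⟨G', hG', hle⟩ := lt_bday_iff.1 hk
  rcases hle.eq_or_lt with rfl | hlt
  · exact ⟨G', hG', rfl⟩
  · obtain ⟨G'', hG'', rfl⟩ := (ih G' hG' (h.of_mem_opts hG') k).2 hlt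
    exact ⟨G'', h.mem_opts_of_mem_opts hG' hG'', rfl⟩

theorem TransGame.grundy_eq_bday {G : AGame} (h : TransGame G) : grundy G = bday G := by
  induction G using opts_induction with
  | step G ih =>
  have hvalues : {m | ∃ G' ∈ G.opts, grundy G' = m} = Set.Iio (bday G) := by
    ext m
    rw [Set.mem_Iio, ← h.exists_mem_opts_bday_eq_iff]
    refine exists_congr fun G' => and_congr_right fun hG' => ?_
    rw [ih G' hG' (h.of_mem_opts hG')]
  rw [grundy_eq_mex, hvalues, mex_Iio]

theorem TransGame.canonical {G : AGame} (h : TransGame G) : Canonical G := by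
  induction G using opts_induction with
  | step G ih =>
  refine (canonical_iff G).2 ⟨fun G' hG' => ih G' hG' (h.of_mem_opts hG'), ?_⟩
  rintro G' hG' ⟨G'', hG'', hequiv⟩
  have hmem := h.mem_opts_of_mem_opts hG' hG''
  have hgrundy := hequiv.grundy_eq
  rw [(h.of_mem_opts hmem).grundy_eq_bday, h.grundy_eq_bday] at hgrundy
  exact (bday_lt_of_mem_opts hmem).ne hgrundy

end AGame

/-- Transitive games: `𝒢(G)=b(G)`, the options realize exactly the birthdays
`0,…,b(G)−1`, and every transitive game is canonical. -/
theorem AGame.transitive_props (G : AGame) (h : AGame.TransGame G) :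
    AGame.grundy G = AGame.bday G ∧
    (∀ k : ℕ, (∃ G' ∈ G.opts, AGame.bday G' = k) ↔ k < AGame.bday G) ∧
    AGame.Canonical G :=
  ⟨h.grundy_eq_bday, h.exists_mem_opts_bday_eq_iff, h.canonical⟩
end
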